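/- arXiv:2109.12355 — 2 statements merged into one kernel-verified Lean document; each statement's English description precedes it below -/
import Mathlib

section
/- For any suboptimal solution u⁰ ∈ 𝒰̃_N(x₀) := {u ∈ 𝒰_N(x₀) : J_N(x₀, u) ≤ J_N(x₀, w(x₀))}, where w(x₀) is an admissible warm-start, and x⁺ = f(x₀, u⁰(0)), the shift-and-append successor warm-start w⁺ of u⁰ satisfies J_N(x⁺, w⁺) ≤ J_N(x₀, w(x₀)) − ℓ(x₀, u⁰(0)). -/
def traj {X U : Type*} [Zero U] (f : X → U → X) (N : ℕ) (x0 : X) (u : Fin N → U) : ℕ → X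
  | 0 => x0
  | k + 1 => f (traj f N x0 u k) (if h : k < N then u ⟨k, h⟩ else 0)

def Adm {X U : Type*} [Zero U] (f : X → U → X) (N : ℕ) (Xset : Set X) (Uset : Set U)
    (Xf : Set X) (x0 : X) (u : Fin N → U) : Prop :=
  (∀ k, u k ∈ Uset) ∧ (∀ k < N, traj f N x0 u k ∈ Xset) ∧ traj f N x0 u N ∈ Xf

def costJ {X U : Type*} [Zero U] (f : X → U → X) (ℓ : X → U → ℝ) (Vf : X → ℝ) (N : ℕ)
    (x0 : X) (u : Fin N → U) : ℝ :=
  (∑ k ∈ Finset.range N, ℓ (traj f N x0 u k) (if h : k < N then u ⟨k, h⟩ else 0)) +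
    Vf (traj f N x0 u N)

def shiftAppend {X U : Type*} [Zero U] (f : X → U → X) (κ : X → U) (N : ℕ) (x0 : X)
    (u : Fin N → U) : Fin N → U :=
  fun k => if h : (k : ℕ) + 1 < N then u ⟨(k : ℕ) + 1, h⟩ else κ (traj f N x0 u N)

/-!
Shifting `u⁰` by one step and appending the terminal control law reproduces the tail of the
trajectory of `u⁰` from `x⁺`, followed by one step of `κ_f` from the terminal state `x_N ∈ X_f`.
Hence the new cost is the old cost minus the first stage cost, plus
`ℓ(x_N, κ_f x_N) + V_f(f(x_N, κ_f x_N)) - V_f(x_N)`, which the CLF inequality makes nonpositive;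
suboptimality of `u⁰` then compares with the warm start.
-/

section ShiftAppend

variable {X U : Type*} [Zero U] (f : X → U → X) (κ : X → U) (ℓ : X → U → ℝ) (Vf : X → ℝ)
  {N : ℕ} (x0 : X)

@[simp]
theorem traj_zero (u : Fin N → U) : traj f N x0 u 0 = x0 := rfl

theorem traj_succ_of_lt (u : Fin N → U) {k : ℕ} (hk : k < N) :
    traj f N x0 u (k + 1) = f (traj f N x0 u k) (u ⟨k, hk⟩) := by
  simp [traj, hk]

theorem costJ_eq_sum_fin (u : Fin N → U) :
    costJ f ℓ Vf N x0 u = ∑ k : Fin N, ℓ (traj f N x0 u k) (u k) + Vf (traj f N x0 u N) := by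
  rw [costJ, ← Fin.sum_univ_eq_sum_range]
  simp

theorem shiftAppend_castSucc (u : Fin (N + 1) → U) (k : Fin N) :
    shiftAppend f κ (N + 1) x0 u k.castSucc = u k.succ := by
  simp [shiftAppend, Fin.succ]

theorem shiftAppend_last (u : Fin (N + 1) → U) :
    shiftAppend f κ (N + 1) x0 u (Fin.last N) = κ (traj f (N + 1) x0 u (N + 1)) := by
  simp [shiftAppend]

theorem traj_shiftAppend (u : Fin (N + 1) → U) {k : ℕ} (hk : k ≤ N) :
    traj f (N + 1) (f x0 (u 0)) (shiftAppend f κ (N + 1) x0 u) k =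
      traj f (N + 1) x0 u (k + 1) := by
  induction k with
  | zero => exact (traj_succ_of_lt f x0 u N.succ_pos).symm
  | succ k ih =>
    have hkN : k < N := hk
    rw [traj_succ_of_lt f _ _ (by omega), ih hkN.le,
      traj_succ_of_lt f x0 u (by omega : k + 1 < N + 1)]
    exact congrArg _ (shiftAppend_castSucc f κ x0 u ⟨k, hkN⟩)

theorem traj_shiftAppend_horizon (u : Fin (N + 1) → U) :
    traj f (N + 1) (f x0 (u 0)) (shiftAppend f κ (N + 1) x0 u) (N + 1) =
      f (traj f (N + 1) x0 u (N + 1)) (κ (traj f (N + 1) x0 u (N + 1))) := by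
  rw [traj_succ_of_lt f _ _ N.lt_succ_self, traj_shiftAppend f κ x0 u le_rfl]
  exact congrArg _ (shiftAppend_last f κ x0 u)

theorem costJ_shiftAppend (u : Fin (N + 1) → U) :
    let xN := traj f (N + 1) x0 u (N + 1)
    costJ f ℓ Vf (N + 1) (f x0 (u 0)) (shiftAppend f κ (N + 1) x0 u) + ℓ x0 (u 0) + Vf xN =
      costJ f ℓ Vf (N + 1) x0 u + ℓ xN (κ xN) + Vf (f xN (κ xN)) := by
  intro xN
  have hstage (k : Fin N) :
      ℓ (traj f (N + 1) (f x0 (u 0)) (shiftAppend f κ (N + 1) x0 u) k.castSucc)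
          (shiftAppend f κ (N + 1) x0 u k.castSucc) =
        ℓ (traj f (N + 1) x0 u k.succ) (u k.succ) := by
    rw [shiftAppend_castSucc, Fin.val_castSucc, traj_shiftAppend f κ x0 u k.is_lt.le, Fin.val_succ]
  have hlast : ℓ (traj f (N + 1) (f x0 (u 0)) (shiftAppend f κ (N + 1) x0 u) (Fin.last N))
      (shiftAppend f κ (N + 1) x0 u (Fin.last N)) = ℓ xN (κ xN) := by
    rw [shiftAppend_last, Fin.val_last, traj_shiftAppend f κ x0 u le_rfl]
  rw [costJ_eq_sum_fin, costJ_eq_sum_fin, Fin.sum_univ_castSucc, Fin.sum_univ_succ,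
    Finset.sum_congr rfl fun k _ => hstage k, hlast, traj_shiftAppend_horizon]
  simp only [Fin.val_zero, traj_zero]
  ring

end ShiftAppend

theorem stmt11_general (n m N : ℕ) (hN : 0 < N)
    (f : EuclideanSpace ℝ (Fin n) → EuclideanSpace ℝ (Fin m) → EuclideanSpace ℝ (Fin n))
    (ℓ : EuclideanSpace ℝ (Fin n) → EuclideanSpace ℝ (Fin m) → ℝ)
    (Vf : EuclideanSpace ℝ (Fin n) → ℝ)
    (Xset Xf : Set (EuclideanSpace ℝ (Fin n))) (Uset : Set (EuclideanSpace ℝ (Fin m)))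
    (κ : EuclideanSpace ℝ (Fin n) → EuclideanSpace ℝ (Fin m))
    (hCLF : ∀ x ∈ Xf, Vf (f x (κ x)) ≤ Vf x - ℓ x (κ x))
    (x0 : EuclideanSpace ℝ (Fin n)) (w0 u0 : Fin N → EuclideanSpace ℝ (Fin m))
    (hu0adm : Adm f N Xset Uset Xf x0 u0)
    (hsub : costJ f ℓ Vf N x0 u0 ≤ costJ f ℓ Vf N x0 w0) :
    costJ f ℓ Vf N (f x0 (u0 ⟨0, hN⟩)) (shiftAppend f κ N x0 u0) ≤
      costJ f ℓ Vf N x0 w0 - ℓ x0 (u0 ⟨0, hN⟩) := by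
  obtain ⟨M, rfl⟩ : ∃ M, N = M + 1 := ⟨N - 1, (Nat.succ_pred_eq_of_pos hN).symm⟩
  rw [show (⟨0, hN⟩ : Fin (M + 1)) = 0 from rfl]
  have hdecrease := hCLF _ hu0adm.2.2
  have hshift := costJ_shiftAppend f κ ℓ Vf x0 u0
  simp only at hshift
  linarith

/-- For any suboptimal solution `u⁰ ∈ 𝒰̃_N(x₀) = {u ∈ 𝒰_N(x₀) : J_N(x₀,u) ≤ J_N(x₀,w(x₀))}`
(where `w(x₀)` is an admissible warm-start) and `x⁺ = f(x₀, u⁰(0))`, the shift-and-append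
successor warm-start `w⁺` of `u⁰` satisfies `J_N(x⁺, w⁺) ≤ J_N(x₀, w(x₀)) − ℓ(x₀, u⁰(0))`. -/
theorem stmt11 (n m N : ℕ) (hN : 0 < N)
    (f : EuclideanSpace ℝ (Fin n) → EuclideanSpace ℝ (Fin m) → EuclideanSpace ℝ (Fin n))
    (ℓ : EuclideanSpace ℝ (Fin n) → EuclideanSpace ℝ (Fin m) → ℝ)
    (Vf : EuclideanSpace ℝ (Fin n) → ℝ)
    (Xset Xf : Set (EuclideanSpace ℝ (Fin n))) (Uset : Set (EuclideanSpace ℝ (Fin m)))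
    (κ : EuclideanSpace ℝ (Fin n) → EuclideanSpace ℝ (Fin m))
    (hinv : ∀ x ∈ Xf, f x (κ x) ∈ Xf)
    (hCLF : ∀ x ∈ Xf, Vf (f x (κ x)) ≤ Vf x - ℓ x (κ x))
    (x0 : EuclideanSpace ℝ (Fin n)) (w0 u0 : Fin N → EuclideanSpace ℝ (Fin m))
    (hw0adm : Adm f N Xset Uset Xf x0 w0)
    (hu0adm : Adm f N Xset Uset Xf x0 u0)
    (hsub : costJ f ℓ Vf N x0 u0 ≤ costJ f ℓ Vf N x0 w0) :
    costJ f ℓ Vf N (f x0 (u0 ⟨0, hN⟩)) (shiftAppend f κ N x0 u0) ≤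
      costJ f ℓ Vf N x0 w0 - ℓ x0 (u0 ⟨0, hN⟩) :=
  stmt11_general n m N hN f ℓ Vf Xset Xf Uset κ hCLF x0 w0 u0 hu0adm hsub
end

section
/- Suppose V : Z → ℝ≥0 and H : Z → Set Z satisfy α₁(‖z‖) ≤ V(z) ≤ α₂(‖z‖) and sup_{z⁺ ∈ H(z)} V(z⁺) ≤ V(z) − α₃(‖z‖) for all z in a set S ⊆ Z that is positive invariant (z ∈ S, z⁺ ∈ H(z) ⟹ z⁺ ∈ S), with α₁, α₂, α₃ ∈ 𝒦∞. Then every solution sequence z(n+1) ∈ H(z(n)) with z(0) ∈ S satisfies ‖z(n)‖ → 0 as n → ∞. -/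
open Filter Topology
open scoped NNReal

/-- Lyapunov theorem for difference inclusions: if `V` admits class-`𝒦∞` upper and lower
bounds on a positive invariant set `S` and decreases by `α₃(‖z‖)` along every selection of
`H`, then every solution sequence `z(n+1) ∈ H(z(n))` starting in `S` satisfies `‖z(n)‖ → 0`. -/
theorem stmt18 (d : ℕ)
    (V : EuclideanSpace ℝ (Fin d) → ℝ)
    (H : EuclideanSpace ℝ (Fin d) → Set (EuclideanSpace ℝ (Fin d)))
    (S : Set (EuclideanSpace ℝ (Fin d)))
    (hHne : ∀ z ∈ S, (H z).Nonempty)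
    (α₁ α₂ α₃ : ℝ≥0 → ℝ≥0)
    (hα₁c : Continuous α₁) (hα₁m : StrictMono α₁) (hα₁0 : α₁ 0 = 0)
    (hα₁u : ∀ M : ℝ≥0, ∃ r, M < α₁ r)
    (hα₂c : Continuous α₂) (hα₂m : StrictMono α₂) (hα₂0 : α₂ 0 = 0)
    (hα₂u : ∀ M : ℝ≥0, ∃ r, M < α₂ r)
    (hα₃c : Continuous α₃) (hα₃m : StrictMono α₃) (hα₃0 : α₃ 0 = 0)
    (hα₃u : ∀ M : ℝ≥0, ∃ r, M < α₃ r)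
    (hbound : ∀ z ∈ S, (α₁ ‖z‖₊ : ℝ) ≤ V z ∧ V z ≤ (α₂ ‖z‖₊ : ℝ))
    (hdec : ∀ z ∈ S, ∀ zp ∈ H z, V zp ≤ V z - (α₃ ‖z‖₊ : ℝ))
    (hinv : ∀ z ∈ S, ∀ zp ∈ H z, zp ∈ S) :
    ∀ z : ℕ → EuclideanSpace ℝ (Fin d), z 0 ∈ S → (∀ k, z (k + 1) ∈ H (z k)) →
      Tendsto (fun k => ‖z k‖) atTop (𝓝 0) := by

  intro z hz0 hstep
  have hS : ∀ k, z k ∈ S := by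
    intro k
    induction k with
    | zero => exact hz0
    | succ n ih => exact hinv _ ih _ (hstep n)
  -- V (z k) is antitone and nonneg
  have hnonneg : ∀ k, 0 ≤ V (z k) := fun k =>
    le_trans (α₁ ‖z k‖₊).coe_nonneg (hbound _ (hS k)).1
  have hdecr : ∀ k, V (z (k+1)) ≤ V (z k) - (α₃ ‖z k‖₊ : ℝ) :=
    fun k => hdec _ (hS k) _ (hstep k)
  have hanti : Antitone (fun k => V (z k)) := by
    apply antitone_nat_of_succ_le
    intro k
    have := hdecr k
    have h3 : (0:ℝ) ≤ (α₃ ‖z k‖₊ : ℝ) := (α₃ ‖z k‖₊).coe_nonneg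
    linarith
  obtain ⟨L, hL⟩ : ∃ L, Tendsto (fun k => V (z k)) atTop (𝓝 L) :=
    ⟨_, tendsto_atTop_ciInf hanti ⟨0, fun x ⟨k, hk⟩ => hk ▸ hnonneg k⟩⟩
  have hdiff : Tendsto (fun k => V (z k) - V (z (k+1))) atTop (𝓝 0) := by
    have := hL.sub (hL.comp (tendsto_add_atTop_nat 1))
    simpa using this
  have hsq : Tendsto (fun k => (α₃ ‖z k‖₊ : ℝ)) atTop (𝓝 0) := by
    apply squeeze_zero (fun k => (α₃ ‖z k‖₊).coe_nonneg) _ hdiff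
    intro k
    have := hdecr k
    linarith
  have hsq' : Tendsto (fun k => α₃ ‖z k‖₊) atTop (𝓝 0) := by
    rw [← NNReal.tendsto_coe]
    simpa using hsq
  have hnn : Tendsto (fun k => ‖z k‖₊) atTop (𝓝 0) := by
    refine tendsto_order.2 ⟨fun a ha => absurd ha (by simp), fun a ha => ?_⟩
    have hpos : 0 < α₃ a := by
      rw [← hα₃0]; exact hα₃m ha
    filter_upwards [hsq'.eventually (gt_mem_nhds hpos)] with k hk
    exact hα₃m.lt_iff_lt.mp hk
  have := (NNReal.tendsto_coe (f := atTop)).2 hnn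
  simpa [coe_nnnorm] using this
end
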